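/- Define the marginal (discarding) maps m_C : W → ℝ^(Fin a × Fin b × G) and m_B : W → ℝ^(Fin a × Fin c × G) as the linear maps with m_C(E(i,j,k,s₁,s₂)) = e(i,j,s₁) and m_B(E(i,j,k,s₁,s₂)) = e(i,k,s₂). Then: (i) m_C(P₁₂(w,γ)) = (∑_k γ k)·w for every w ∈ ℝ^(Fin a × Fin b × G) and γ ∈ ℝ^(Fin c), and m_B(P₁₃(v,β)) = (∑_j β j)·v for every v ∈ ℝ^(Fin a × Fin c × G) and β ∈ ℝ^(Fin b), so these maps implement discarding subsystem C, respectively B; (ii) for every tripartite pure state E(i,j,k,s₁,s₂), both marginals m_C(E(i,j,k,s₁,s₂)) = e(i,j,s₁) and m_B(E(i,j,k,s₁,s₂)) = e(i,k,s₂) are entangled pure bipartite states. Hence BCT violates monogamy of entanglement: every tripartite pure state is simultaneously entangled across both bipartitions. -/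
import Mathlib


/-- The sign group `{+1, -1}` under multiplication. -/
abbrev G : Type := ℤˣ

/-- Parallel composition of single-system states in BCT:
`P(ρ,σ)(i,j,s) = ρ i · σ j / 2`. -/
noncomputable def P (a b : ℕ) (ρ : Fin a → ℝ) (σ : Fin b → ℝ) : Fin a × Fin b × G → ℝ :=
  fun p => ρ p.1 * σ p.2.1 / 2

/-- A vector of a bipartite composite space is separable if it is a finite sum of
products `P(α,β)` with `α`, `β` entrywise nonnegative and nonzero. -/
def Separable (a b : ℕ) (w : Fin a × Fin b × G → ℝ) : Prop :=
  ∃ (n : ℕ) (α : Fin n → Fin a → ℝ) (β : Fin n → Fin b → ℝ),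
    (∀ k, (∀ i, 0 ≤ α k i) ∧ α k ≠ 0 ∧ (∀ j, 0 ≤ β k j) ∧ β k ≠ 0) ∧
    w = ∑ k, P a b (α k) (β k)

/-- The tripartite composite space `W = ℝ^(Fin a × Fin b × Fin c × G × G)`, whose
standard basis vector at `(i,j,k,s₁,s₂)` encodes the pure state `((ij)_{s₁}k)_{s₂}`. -/
abbrev W (a b c : ℕ) : Type := Fin a × Fin b × Fin c × G × G → ℝ

/-- Composition `AB` with `C`: the bilinear map with
`P₁₂(e(i,j,s), e k) = (1/2)·∑_{t∈G} E(i,j,k,s,t)`. -/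
noncomputable def P12 (a b c : ℕ) (w : Fin a × Fin b × G → ℝ) (γ : Fin c → ℝ) :
    W a b c :=
  fun q => w (q.1, q.2.1, q.2.2.2.1) * γ q.2.2.1 / 2

/-- Composition `AC` with `B`: the bilinear map with
`P₁₃(e(i,k,t), e j) = (1/2)·∑_{u∈G} E(i,j,k,u,t)`. -/
noncomputable def P13 (a b c : ℕ) (v : Fin a × Fin c × G → ℝ) (β : Fin b → ℝ) :
    W a b c :=
  fun q => v (q.1, q.2.2.1, q.2.2.2.2) * β q.2.1 / 2

/-- The marginal (discarding) map `m_C : W → ℝ^(Fin a × Fin b × G)`, the linear map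
with `m_C(E(i,j,k,s₁,s₂)) = e(i,j,s₁)`. -/
noncomputable def mC (a b c : ℕ) : W a b c →ₗ[ℝ] (Fin a × Fin b × G → ℝ) where
  toFun w := fun p => ∑ k : Fin c, ∑ t : G, w (p.1, p.2.1, k, p.2.2, t)
  map_add' := by
    intro x y
    funext p
    simp [Finset.sum_add_distrib]
  map_smul' := by
    intro r x
    funext p
    simp [Finset.mul_sum, mul_add]

/-- The marginal (discarding) map `m_B : W → ℝ^(Fin a × Fin c × G)`, the linear map
with `m_B(E(i,j,k,s₁,s₂)) = e(i,k,s₂)`. -/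
noncomputable def mB (a b c : ℕ) : W a b c →ₗ[ℝ] (Fin a × Fin c × G → ℝ) where
  toFun w := fun p => ∑ j : Fin b, ∑ t : G, w (p.1, j, p.2.1, t, p.2.2)
  map_add' := by
    intro x y
    funext p
    simp [Finset.sum_add_distrib]
  map_smul' := by
    intro r x
    funext p
    simp [Finset.mul_sum, mul_add]

lemma cardG : Fintype.card G = 2 := rfl

lemma negG_ne (s : G) : -s ≠ s := by
  rcases Int.units_eq_one_or s with h | h <;> simp [h]

lemma not_sep (a b : ℕ) (i : Fin a) (j : Fin b) (s : G) :
    ¬ Separable a b (Pi.single (i, j, s) 1) := by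
  rintro ⟨n, α, β, -, h⟩
  have h1 := congrFun h (i, j, s)
  have h2 := congrFun h (i, j, -s)
  simp only [Pi.single_apply, if_pos rfl, P, Finset.sum_apply] at h1 h2
  rw [if_neg (by simp [Prod.ext_iff, negG_ne s])] at h2
  exact one_ne_zero (h1.trans h2.symm)

lemma singleMarg (a b c : ℕ) (i : Fin a) (j : Fin b) (k : Fin c) (s₁ s₂ : G) :
    mC a b c (Pi.single (i, j, k, s₁, s₂) 1) =
      (Pi.single (i, j, s₁) 1 : Fin a × Fin b × G → ℝ) := by
  funext p
  obtain ⟨pi, pj, ps⟩ := p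
  simp only [mC, LinearMap.coe_mk, AddHom.coe_mk]
  rw [Finset.sum_eq_single k
      (fun x _ hx => Finset.sum_eq_zero fun t _ => by
        simp [Pi.single_apply, Prod.ext_iff, hx]) (by simp),
    Finset.sum_eq_single s₂
      (fun t _ ht => by simp [Pi.single_apply, Prod.ext_iff, ht])
      (fun h => absurd (Finset.mem_univ _) h)]
  by_cases h : pi = i ∧ pj = j ∧ ps = s₁
  · obtain ⟨rfl, rfl, rfl⟩ := h
    simp
  · rw [Pi.single_eq_of_ne (by simp [Prod.ext_iff]; tauto),
      Pi.single_eq_of_ne (by simp [Prod.ext_iff]; tauto)]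

lemma singleMargB (a b c : ℕ) (i : Fin a) (j : Fin b) (k : Fin c) (s₁ s₂ : G) :
    mB a b c (Pi.single (i, j, k, s₁, s₂) 1) =
      (Pi.single (i, k, s₂) 1 : Fin a × Fin c × G → ℝ) := by
  funext p
  obtain ⟨pi, pk, ps⟩ := p
  simp only [mB, LinearMap.coe_mk, AddHom.coe_mk]
  rw [Finset.sum_eq_single j
      (fun x _ hx => Finset.sum_eq_zero fun t _ => by
        simp [Pi.single_apply, Prod.ext_iff, hx]) (by simp),
    Finset.sum_eq_single s₁
      (fun t _ ht => by simp [Pi.single_apply, Prod.ext_iff, ht])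
      (fun h => absurd (Finset.mem_univ _) h)]
  by_cases h : pi = i ∧ pk = k ∧ ps = s₂
  · obtain ⟨rfl, rfl, rfl⟩ := h
    simp
  · rw [Pi.single_eq_of_ne (by simp [Prod.ext_iff]; tauto),
      Pi.single_eq_of_ne (by simp [Prod.ext_iff]; tauto)]

/-- (i) `m_C` and `m_B` implement discarding subsystem `C`, resp. `B`;
(ii) both marginals of every tripartite pure state `E(i,j,k,s₁,s₂)` are entangled
pure bipartite states: BCT violates monogamy of entanglement. -/
theorem bct_violates_monogamy_of_entanglement (a b c : ℕ)
    (ha : 0 < a) (hb : 0 < b) (hc : 0 < c) :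
    (∀ (w : Fin a × Fin b × G → ℝ) (γ : Fin c → ℝ),
      mC a b c (P12 a b c w γ) = (∑ k, γ k) • w) ∧
    (∀ (v : Fin a × Fin c × G → ℝ) (β : Fin b → ℝ),
      mB a b c (P13 a b c v β) = (∑ j, β j) • v) ∧
    (∀ (i : Fin a) (j : Fin b) (k : Fin c) (s₁ s₂ : G),
      mC a b c (Pi.single (i, j, k, s₁, s₂) 1) =
        (Pi.single (i, j, s₁) 1 : Fin a × Fin b × G → ℝ) ∧
      ¬ Separable a b (mC a b c (Pi.single (i, j, k, s₁, s₂) 1)) ∧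
      mB a b c (Pi.single (i, j, k, s₁, s₂) 1) =
        (Pi.single (i, k, s₂) 1 : Fin a × Fin c × G → ℝ) ∧
      ¬ Separable a c (mB a b c (Pi.single (i, j, k, s₁, s₂) 1))) := by
  refine ⟨?_, ?_, ?_⟩
  · intro w γ
    funext p
    simp only [mC, P12, LinearMap.coe_mk, AddHom.coe_mk, Pi.smul_apply, smul_eq_mul,
      Finset.sum_const, Finset.card_univ, cardG, nsmul_eq_mul, Nat.cast_ofNat,
      ← Finset.sum_mul, ← Finset.mul_sum]
    rw [Finset.sum_mul, Finset.mul_sum]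
    exact Finset.sum_congr rfl fun x _ => by ring
  · intro v β
    funext p
    simp only [mB, P13, LinearMap.coe_mk, AddHom.coe_mk, Pi.smul_apply, smul_eq_mul,
      Finset.sum_const, Finset.card_univ, cardG, nsmul_eq_mul, Nat.cast_ofNat,
      ← Finset.sum_mul, ← Finset.mul_sum]
    rw [Finset.sum_mul, Finset.mul_sum]
    exact Finset.sum_congr rfl fun x _ => by ring
  · intro i j k s₁ s₂
    refine ⟨singleMarg a b c i j k s₁ s₂, ?_, singleMargB a b c i j k s₁ s₂, ?_⟩
    · rw [singleMarg]; exact not_sep a b i j s₁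
    · rw [singleMargB]; exact not_sep a c i k s₂
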